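/- Let 0 < p < ∞ and let v be an admissible weight function, and let 𝒯 = {T_t : t ≥ 0} be the semigroup of left translation operators on X = L^p_v(ℝ₊). If there exist f, g ∈ X forming a Li-Yorke scrambled pair for 𝒯, then 𝒯 has infinite topological entropy. -/

import Mathlib

/-!
Put `h = f - g`. Along the Li–Yorke times `‖T_a h‖` is arbitrarily small while `‖T_b h‖ ≥ c` for
some later `b`, so `T_u` with `u = b - a` enlarges `H = T_a h` by a factor larger than `1 / η`.
Then the weighted mass of `T_u H` cannot sit where `v (ζ + u) > η ^ p v ζ`, so the set where
`v (ζ + u) ≤ η ^ p v ζ` carries positive mass. This mass has no atoms, so that set splits into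
`N` pieces of positive mass; restricting `H` to the translated pieces and renormalising gives `N`
functions of norm at most `η` with disjoint supports, which `T_u` sends to points at mutual
distance at least `1`. With `η = 2⁻ʲ` and `N = ⌈exp (j u)⌉`, the union of these families and `0`
is compact, and its separated sets grow at exponential rate at least `j` for every `j`.
-/

open MeasureTheory Filter Set
open scoped ENNReal

/-- The `L^p_v` norm of a function on `[0,∞)`:
`‖f‖ = (∫₀^∞ |f(x)|^p v(x) dx)^(1/p)`. -/
noncomputable def lpNorm (p : ℝ) (v : ℝ → ℝ) (f : ℝ → ℝ) : ℝ :=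
  (∫ x in Set.Ici (0:ℝ), |f x| ^ p * v x) ^ (1 / p)

/-- Membership in the weighted Lebesgue space `L^p_v(ℝ₊)`. -/
def MemLpW (p : ℝ) (v : ℝ → ℝ) (f : ℝ → ℝ) : Prop :=
  AEStronglyMeasurable f (volume.restrict (Set.Ici (0:ℝ))) ∧
    IntegrableOn (fun x => |f x| ^ p * v x) (Set.Ici (0:ℝ))

/-- The left translation operator `(T_t f)(x) = f (x + t)`. -/
def translateW (t : ℝ) (f : ℝ → ℝ) : ℝ → ℝ := fun x => f (x + t)

/-- `v` is an admissible weight function: strictly positive, locally integrable on `[0,∞)`,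
and there are `M ≥ 1`, `w ≥ 0` with `v x ≤ M * exp (w*t) * v (x+t)` for all `x, t ≥ 0`. -/
def AdmissibleWeight (v : ℝ → ℝ) : Prop :=
  (∀ x, 0 ≤ x → 0 < v x) ∧
  (∀ a, 0 ≤ a → IntegrableOn v (Set.Icc (0:ℝ) a)) ∧
  ∃ M, 1 ≤ M ∧ ∃ w, 0 ≤ w ∧ ∀ x, 0 ≤ x → ∀ t, 0 ≤ t →
    v x ≤ M * Real.exp (w * t) * v (x + t)

/-- The set `{ v x / v y : 0 ≤ x ≤ y }`. -/
def ratioSet (v : ℝ → ℝ) : Set ℝ := {r | ∃ x y, 0 ≤ x ∧ x ≤ y ∧ r = v x / v y}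

/-- `S` is a `(t,ε)`-separated set for the family `{T_u : u ≥ 0}` with respect to the
distance `d`: distinct points of `S` are `ε`-apart at some time `u ∈ [0,t]`. -/
def IsSepSet {X : Type*} (d : X → X → ℝ) (T : ℝ → X → X) (t ε : ℝ) (S : Set X) : Prop :=
  ∀ f ∈ S, ∀ g ∈ S, f ≠ g → ∃ u ∈ Set.Icc (0:ℝ) t, ε ≤ d (T u f) (T u g)

/-- The largest cardinality `s_{t,ε}(𝒯,K)` of a `(t,ε)`-separated subset of `K`
(as an extended natural number, viewed in `ℝ≥0∞`). -/
noncomputable def maxSep {X : Type*} (d : X → X → ℝ) (T : ℝ → X → X) (K : Set X)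
    (t ε : ℝ) : ℝ≥0∞ :=
  ⨆ (S : Finset X) (_ : ↑S ⊆ K ∧ IsSepSet d T t ε ↑S), (S.card : ℝ≥0∞)

open Classical in
/-- Extended-real logarithm of an extended nonnegative real. -/
noncomputable def elog (x : ℝ≥0∞) : EReal :=
  if x = ⊤ then ⊤ else ((Real.log x.toReal : ℝ) : EReal)

/-- The topological entropy `h(𝒯,K)` of the family `{T_u : u ≥ 0}` on the set `K`,
with respect to the distance `d`; since `ε ↦ limsup_t (1/t) log s_{t,ε}` is antitone,
the limit as `ε → 0⁺` is the supremum over `ε > 0`. -/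
noncomputable def entropyOn {X : Type*} (d : X → X → ℝ) (T : ℝ → X → X) (K : Set X) : EReal :=
  ⨆ (ε : ℝ) (_ : 0 < ε),
    Filter.limsup (fun t : ℝ => ((t⁻¹ : ℝ) : EReal) * elog (maxSep d T K t ε)) Filter.atTop

/-- Sequential compactness of a set with respect to a (pseudo)distance `d`; for metric
spaces this is equivalent to compactness. -/
def DSeqCompact {X : Type*} (d : X → X → ℝ) (K : Set X) : Prop :=
  ∀ u : ℕ → X, (∀ n, u n ∈ K) → ∃ g ∈ K, ∃ φ : ℕ → ℕ, StrictMono φ ∧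
    Filter.Tendsto (fun n => d (u (φ n)) g) Filter.atTop (nhds 0)

/-- The topological entropy `h(𝒯) = sup { h(𝒯,K) : K ⊆ A compact }` of the family
`{T_u : u ≥ 0}` on the space `A`, with respect to the distance `d`. -/
noncomputable def entropyFam {X : Type*} (d : X → X → ℝ) (T : ℝ → X → X) (A : Set X) : EReal :=
  ⨆ (K : Set X) (_ : K ⊆ A ∧ DSeqCompact d K), entropyOn d T K

open Function Topology

section Entropy

variable {X : Type*} {d : X → X → ℝ} {T : ℝ → X → X}

lemma coe_le_inv_mul_elog {t L : ℝ} (ht : 0 < t) {x : ℝ≥0∞}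
    (hx : ENNReal.ofReal (Real.exp (L * t)) ≤ x) :
    (L : EReal) ≤ ((t⁻¹ : ℝ) : EReal) * elog x := by
  unfold elog
  split_ifs with hx_top
  · rw [EReal.coe_mul_top_of_pos (inv_pos.2 ht)]
    exact le_top
  · have hexp := (ENNReal.ofReal_le_iff_le_toReal hx_top).1 hx
    rw [← EReal.coe_mul, EReal.coe_le_coe_iff, le_inv_mul_iff₀ ht, mul_comm,
      Real.le_log_iff_exp_le ((Real.exp_pos _).trans_le hexp)]
    exact hexp

lemma entropyOn_eq_top_of_frequently {K : Set X} {ε : ℝ} (hε : 0 < ε)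
    (h : ∀ L : ℝ, ∃ᶠ t in atTop, ∃ S : Finset X, ↑S ⊆ K ∧ IsSepSet d T t ε ↑S ∧
      Real.exp (L * t) ≤ S.card) :
    entropyOn d T K = ⊤ := by
  refine eq_top_iff.2 (le_iSup₂_of_le ε hε (EReal.eq_top_iff_forall_lt _ |>.2 fun L => ?_).ge)
  refine (EReal.coe_lt_coe_iff.2 (lt_add_one L)).trans_le (le_limsup_of_frequently_le' ?_)
  refine ((h (L + 1)).and_eventually (eventually_gt_atTop 0)).mono ?_
  rintro t ⟨⟨S, hSK, hS, hcard⟩, ht⟩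
  refine coe_le_inv_mul_elog ht ?_
  calc ENNReal.ofReal (Real.exp ((L + 1) * t)) ≤ ENNReal.ofReal S.card :=
        ENNReal.ofReal_le_ofReal hcard
    _ = S.card := ENNReal.ofReal_natCast _
    _ ≤ maxSep d T K t ε := le_iSup₂_of_le S ⟨hSK, hS⟩ le_rfl

/-- A sequence in `K` either visits some point infinitely often, or leaves every finite set and
hence converges to `z`. -/
lemma dSeqCompact_insert_iUnion (hd_self : ∀ x, d x x = 0) (hd_nonneg : ∀ x y, 0 ≤ d x y)
    {z : X} {S : ℕ → Finset X} {r : ℕ → ℝ} (hr : Tendsto r atTop (𝓝 0))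
    (hS : ∀ j, ∀ x ∈ S j, d x z ≤ r j) :
    DSeqCompact d (insert z (⋃ j, (S j : Set X))) := by
  intro s hs
  by_cases hrec : ∃ y, ∃ᶠ n in atTop, s n = y
  · obtain ⟨y, hy⟩ := hrec
    obtain ⟨φ, hφ, hφy⟩ := extraction_of_frequently_atTop hy
    refine ⟨y, hφy 0 ▸ hs _, φ, hφ, ?_⟩
    simp [hφy, hd_self]
  push Not at hrec
  refine ⟨z, mem_insert _ _, id, strictMono_id, tendsto_order.2
    ⟨fun a ha => Eventually.of_forall fun n => ha.trans_le (hd_nonneg _ _), fun ε hε => ?_⟩⟩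
  obtain ⟨J, hJ⟩ := eventually_atTop.1 (hr.eventually (gt_mem_nhds hε))
  have hfin : (insert z (⋃ j ∈ Iio J, (S j : Set X))).Finite :=
    ((finite_Iio J).biUnion fun j _ => (S j).finite_toSet).insert z
  filter_upwards [(eventually_all_finite hfin).2 fun y _ => hrec y] with n hn
  obtain hz | hn' := hs n
  · exact absurd hz (hn z (mem_insert _ _))
  obtain ⟨j, hj⟩ := mem_iUnion.1 hn'
  have hJj : J ≤ j := not_lt.1 fun hjJ =>
    hn (s n) (mem_insert_of_mem _ (mem_biUnion hjJ hj)) rfl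
  exact (hS j _ hj).trans_lt (hJ j hJj)

lemma entropyFam_eq_top_of_isSepSet (hd_self : ∀ x, d x x = 0) (hd_nonneg : ∀ x y, 0 ≤ d x y)
    {A : Set X} {z : X} (hz : z ∈ A) {ε : ℝ} (hε : 0 < ε) {S : ℕ → Finset X} {r t : ℕ → ℝ}
    (hSA : ∀ j, ↑(S j) ⊆ A) (hr : Tendsto r atTop (𝓝 0)) (hSr : ∀ j, ∀ x ∈ S j, d x z ≤ r j)
    (ht : Tendsto t atTop atTop) (hsep : ∀ j, IsSepSet d T (t j) ε ↑(S j))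
    (hcard : ∀ j : ℕ, Real.exp (j * t j) ≤ (S j).card) :
    entropyFam d T A = ⊤ := by
  refine eq_top_iff.2 (le_iSup₂_of_le _ ⟨insert_subset hz (iUnion_subset hSA),
    dSeqCompact_insert_iUnion hd_self hd_nonneg hr hSr⟩
    (entropyOn_eq_top_of_frequently hε fun L => ?_).ge)
  refine ht.frequently
    (((eventually_ge_atTop ⌈L⌉₊).and (ht.eventually_ge_atTop 0)).mono ?_).frequently
  rintro j ⟨hLj, htj⟩
  refine ⟨S j, (subset_iUnion (fun j => (S j : Set X)) j).trans (subset_insert _ _), hsep j, ?_⟩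
  exact (Real.exp_le_exp.2 (mul_le_mul_of_nonneg_right (Nat.ceil_le.1 hLj) htj)).trans (hcard j)

end Entropy

local notation "μ₊" => (volume.restrict (Ici (0:ℝ)) : Measure ℝ)

lemma abs_sub_rpow_le {p : ℝ} (hp : 0 ≤ p) (a b : ℝ) :
    |a - b| ^ p ≤ 2 ^ p * (|a| ^ p + |b| ^ p) := by
  have hab : |a - b| ≤ 2 * max |a| |b| := by
    linarith [abs_sub a b, le_max_left |a| |b|, le_max_right |a| |b|]
  calc |a - b| ^ p ≤ (2 * max |a| |b|) ^ p := by gcongr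
    _ = 2 ^ p * max |a| |b| ^ p := Real.mul_rpow zero_le_two (le_max_of_le_left (abs_nonneg a))
    _ ≤ 2 ^ p * (|a| ^ p + |b| ^ p) := by
      gcongr
      rcases le_total |a| |b| with h | h
      · rw [max_eq_right h]; linarith [Real.rpow_nonneg (abs_nonneg a) p]
      · rw [max_eq_left h]; linarith [Real.rpow_nonneg (abs_nonneg b) p]

lemma measurePreserving_add_Ici (u : ℝ) :
    MeasurePreserving (· + u) μ₊ (volume.restrict (Ici u)) := by
  simpa using (measurePreserving_add_right volume u).restrict_preimage (measurableSet_Ici (a := u))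

lemma quasiMeasurePreserving_add_Ici {u : ℝ} (hu : 0 ≤ u) :
    Measure.QuasiMeasurePreserving (· + u) μ₊ μ₊ :=
  (measurePreserving_add_Ici u).quasiMeasurePreserving.mono_right
    (Measure.restrict_mono (Ici_subset_Ici.2 hu) le_rfl).absolutelyContinuous

lemma lintegral_Ici_comp_add (g : ℝ → ℝ≥0∞) (u : ℝ) :
    ∫⁻ x in Ici 0, g (x + u) = ∫⁻ x in Ici u, g x :=
  (measurePreserving_add_Ici u).lintegral_comp_emb (measurableEmbedding_addRight u) g

lemma translateW_translateW (s t : ℝ) (f : ℝ → ℝ) :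
    translateW s (translateW t f) = translateW (s + t) f := by
  ext x
  simp [translateW, add_assoc]

lemma translateW_smul (t c : ℝ) (f : ℝ → ℝ) : translateW t (c • f) = c • translateW t f := rfl

lemma translateW_indicator_preimage_sub (u : ℝ) (E : Set ℝ) (f : ℝ → ℝ) :
    translateW u (((· - u) ⁻¹' E).indicator f) = E.indicator (translateW u f) := by
  ext x
  by_cases hx : x ∈ E <;> simp [translateW, hx]

lemma MeasureTheory.AEStronglyMeasurable.translateW {f : ℝ → ℝ}
    (hf : AEStronglyMeasurable f μ₊) {t : ℝ} (ht : 0 ≤ t) :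
    AEStronglyMeasurable (_root_.translateW t f) μ₊ :=
  hf.comp_quasiMeasurePreserving (quasiMeasurePreserving_add_Ici ht)

lemma AdmissibleWeight.aestronglyMeasurable {v : ℝ → ℝ} (hv : AdmissibleWeight v) :
    AEStronglyMeasurable v μ₊ := by
  have hcover : Ici (0:ℝ) = ⋃ n : ℕ, Icc (0:ℝ) n := by
    ext x
    simpa using fun hx : 0 ≤ x => exists_nat_ge x
  rw [hcover, aestronglyMeasurable_iUnion_iff]
  exact fun n => (hv.2.1 n n.cast_nonneg).aestronglyMeasurable

section WeightedLp

variable {p : ℝ} {v f g : ℝ → ℝ}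

noncomputable def lpDensity (p : ℝ) (v f : ℝ → ℝ) (x : ℝ) : ℝ≥0∞ :=
  ENNReal.ofReal (|f x| ^ p * v x)

/-- The `p`-th power of the `L^p_v` norm in `ℝ≥0∞`; unlike `lpNorm`, whose Bochner integral is
`0` on non-integrable functions, it is `⊤` there. -/
noncomputable def lpMass (p : ℝ) (v f : ℝ → ℝ) : ℝ≥0∞ :=
  ∫⁻ x in Ici 0, lpDensity p v f x

lemma MeasureTheory.AEStronglyMeasurable.rpow_abs_mul {μ : Measure ℝ}
    (hf : AEStronglyMeasurable f μ) (hv : AEStronglyMeasurable v μ) :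
    AEStronglyMeasurable (fun x => |f x| ^ p * v x) μ :=
  (hf.aemeasurable.abs.pow_const p).aestronglyMeasurable.mul hv

lemma memLpW_iff (hv0 : ∀ x, 0 ≤ x → 0 ≤ v x) (hvm : AEStronglyMeasurable v μ₊) :
    MemLpW p v f ↔ AEStronglyMeasurable f μ₊ ∧ lpMass p v f < ⊤ := by
  refine and_congr_right fun hf => ?_
  rw [IntegrableOn, Integrable, hasFiniteIntegral_iff_ofReal
    (ae_restrict_of_forall_mem measurableSet_Ici fun x hx =>
      mul_nonneg (Real.rpow_nonneg (abs_nonneg _) _) (hv0 x hx))]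
  exact and_iff_right (hf.rpow_abs_mul hvm)

lemma lpNorm_eq_toReal_lpMass (hv0 : ∀ x, 0 ≤ x → 0 ≤ v x) (hvm : AEStronglyMeasurable v μ₊)
    (hf : AEStronglyMeasurable f μ₊) : lpNorm p v f = (lpMass p v f).toReal ^ (1 / p) := by
  rw [_root_.lpNorm, integral_eq_lintegral_of_nonneg_ae (ae_restrict_of_forall_mem measurableSet_Ici
    fun x hx => mul_nonneg (Real.rpow_nonneg (abs_nonneg _) _) (hv0 x hx)) (hf.rpow_abs_mul hvm)]
  rfl

lemma MemLpW.ofReal_lpNorm_rpow (hp : p ≠ 0) (hv0 : ∀ x, 0 ≤ x → 0 ≤ v x)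
    (hvm : AEStronglyMeasurable v μ₊) (hf : MemLpW p v f) :
    ENNReal.ofReal (lpNorm p v f ^ p) = lpMass p v f := by
  rw [lpNorm_eq_toReal_lpMass hv0 hvm hf.1, one_div, Real.rpow_inv_rpow ENNReal.toReal_nonneg hp,
    ENNReal.ofReal_toReal ((memLpW_iff hv0 hvm).1 hf).2.ne]

lemma lpNorm_nonneg (hv0 : ∀ x, 0 ≤ x → 0 ≤ v x) : 0 ≤ lpNorm p v f :=
  Real.rpow_nonneg (setIntegral_nonneg measurableSet_Ici fun x hx =>
    mul_nonneg (Real.rpow_nonneg (abs_nonneg _) _) (hv0 x hx)) _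

lemma lpNorm_zero (hp : p ≠ 0) : lpNorm p v 0 = 0 := by
  simp [_root_.lpNorm, Real.zero_rpow hp, Real.zero_rpow (inv_ne_zero hp)]

lemma memLpW_zero (hp : p ≠ 0) : MemLpW p v 0 :=
  ⟨aestronglyMeasurable_const, by simp [Real.zero_rpow hp]⟩

lemma lpNorm_smul (hp : p ≠ 0) (hv0 : ∀ x, 0 ≤ x → 0 ≤ v x) (c : ℝ) (f : ℝ → ℝ) :
    lpNorm p v (c • f) = |c| * lpNorm p v f := by
  have hint : 0 ≤ ∫ x in Ici 0, |f x| ^ p * v x := setIntegral_nonneg measurableSet_Ici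
    fun x hx => mul_nonneg (Real.rpow_nonneg (abs_nonneg _) _) (hv0 x hx)
  simp only [_root_.lpNorm, Pi.smul_apply, smul_eq_mul, abs_mul,
    Real.mul_rpow (abs_nonneg c) (abs_nonneg _), mul_assoc, integral_const_mul]
  rw [Real.mul_rpow (Real.rpow_nonneg (abs_nonneg c) _) hint, one_div,
    Real.rpow_rpow_inv (abs_nonneg c) hp]

lemma MemLpW.const_smul (hf : MemLpW p v f) (c : ℝ) : MemLpW p v (c • f) := by
  refine ⟨hf.1.const_smul c, ?_⟩
  simp only [IntegrableOn, Pi.smul_apply, smul_eq_mul, abs_mul,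
    Real.mul_rpow (abs_nonneg c) (abs_nonneg _), mul_assoc]
  exact hf.2.const_mul (|c| ^ p)

lemma MemLpW.mono (hp : 0 ≤ p) (hv0 : ∀ x, 0 ≤ x → 0 ≤ v x) (hvm : AEStronglyMeasurable v μ₊)
    (hg : MemLpW p v g) (hf : AEStronglyMeasurable f μ₊) (hfg : ∀ x, |f x| ≤ |g x|) :
    MemLpW p v f := by
  refine ⟨hf, hg.2.mono' (hf.rpow_abs_mul hvm) (ae_restrict_of_forall_mem measurableSet_Ici
    fun x hx => ?_)⟩
  rw [Real.norm_of_nonneg (mul_nonneg (Real.rpow_nonneg (abs_nonneg _) _) (hv0 x hx))]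
  exact mul_le_mul_of_nonneg_right (Real.rpow_le_rpow (abs_nonneg _) (hfg x) hp) (hv0 x hx)

lemma MemLpW.sub (hp : 0 ≤ p) (hv0 : ∀ x, 0 ≤ x → 0 ≤ v x) (hvm : AEStronglyMeasurable v μ₊)
    (hf : MemLpW p v f) (hg : MemLpW p v g) : MemLpW p v (f - g) := by
  refine ⟨hf.1.sub hg.1, ((hf.2.add hg.2).const_mul (2 ^ p)).mono'
    ((hf.1.sub hg.1).rpow_abs_mul hvm) (ae_restrict_of_forall_mem measurableSet_Ici
    fun x hx => ?_)⟩
  rw [Real.norm_of_nonneg (mul_nonneg (Real.rpow_nonneg (abs_nonneg _) _) (hv0 x hx))]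
  calc |f x - g x| ^ p * v x ≤ 2 ^ p * (|f x| ^ p + |g x| ^ p) * v x :=
        mul_le_mul_of_nonneg_right (abs_sub_rpow_le hp _ _) (hv0 x hx)
    _ = 2 ^ p * (|f x| ^ p * v x + |g x| ^ p * v x) := by ring

lemma lpNorm_mono (hp : 0 ≤ p) (hv0 : ∀ x, 0 ≤ x → 0 ≤ v x) (hg : MemLpW p v g)
    (hfg : ∀ x, |f x| ≤ |g x|) : lpNorm p v f ≤ lpNorm p v g := by
  refine Real.rpow_le_rpow (setIntegral_nonneg measurableSet_Ici fun x hx =>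
    mul_nonneg (Real.rpow_nonneg (abs_nonneg _) _) (hv0 x hx))
    (integral_mono_of_nonneg ?_ hg.2 ?_) (by positivity)
  all_goals refine ae_restrict_of_forall_mem measurableSet_Ici fun x hx => ?_
  · exact mul_nonneg (Real.rpow_nonneg (abs_nonneg _) _) (hv0 x hx)
  · exact mul_le_mul_of_nonneg_right (Real.rpow_le_rpow (abs_nonneg _) (hfg x) hp) (hv0 x hx)

lemma lpNorm_le_lpNorm_sub_of_disjoint (hp : 0 ≤ p) (hv0 : ∀ x, 0 ≤ x → 0 ≤ v x)
    (hfg : MemLpW p v (f - g)) (hdisj : ∀ x, f x ≠ 0 → g x = 0) :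
    lpNorm p v f ≤ lpNorm p v (f - g) := by
  refine lpNorm_mono hp hv0 hfg fun x => ?_
  by_cases hx : f x = 0
  · simp [hx]
  · simp [hdisj x hx]

lemma lpMass_translateW_le {t C : ℝ} (ht : 0 ≤ t) (hC : 0 ≤ C)
    (hvt : ∀ x, 0 ≤ x → v x ≤ C * v (x + t)) (f : ℝ → ℝ) :
    lpMass p v (translateW t f) ≤ ENNReal.ofReal C * lpMass p v f :=
  calc lpMass p v (translateW t f)
      ≤ ∫⁻ x in Ici 0, ENNReal.ofReal C * lpDensity p v f (x + t) := by
        refine setLIntegral_mono' measurableSet_Ici fun x hx => ?_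
        rw [lpDensity, lpDensity, translateW, ← ENNReal.ofReal_mul hC]
        refine ENNReal.ofReal_le_ofReal ?_
        calc |f (x + t)| ^ p * v x ≤ |f (x + t)| ^ p * (C * v (x + t)) :=
              mul_le_mul_of_nonneg_left (hvt x hx) (Real.rpow_nonneg (abs_nonneg _) _)
          _ = C * (|f (x + t)| ^ p * v (x + t)) := by ring
    _ = ENNReal.ofReal C * ∫⁻ x in Ici t, lpDensity p v f x := by
        rw [lintegral_const_mul' _ _ ENNReal.ofReal_ne_top, lintegral_Ici_comp_add]
    _ ≤ ENNReal.ofReal C * lpMass p v f := by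
        gcongr
        exact lintegral_mono_set (Ici_subset_Ici.2 ht)

lemma MemLpW.translateW (hv : AdmissibleWeight v) (hf : MemLpW p v f) {t : ℝ} (ht : 0 ≤ t) :
    MemLpW p v (translateW t f) := by
  obtain ⟨M, hM, w, -, hadm⟩ := hv.2.2
  have hv0 : ∀ x, 0 ≤ x → 0 ≤ v x := fun x hx => (hv.1 x hx).le
  rw [memLpW_iff hv0 hv.aestronglyMeasurable] at hf ⊢
  exact ⟨hf.1.translateW ht, (lpMass_translateW_le ht (by positivity)
    (fun x hx => hadm x hx t ht) f).trans_lt (ENNReal.mul_lt_top ENNReal.ofReal_lt_top hf.2)⟩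

lemma lpDensity_indicator (hp : p ≠ 0) (s : Set ℝ) (f : ℝ → ℝ) :
    lpDensity p v (s.indicator f) = s.indicator (lpDensity p v f) := by
  ext x
  by_cases hx : x ∈ s <;> simp [lpDensity, hx, Real.zero_rpow hp]

lemma lpMass_indicator (hp : p ≠ 0) {s : Set ℝ} (hs : MeasurableSet s) (f : ℝ → ℝ) :
    lpMass p v (s.indicator f) = ∫⁻ x in s, lpDensity p v f x ∂μ₊ := by
  rw [lpMass, lpDensity_indicator hp, lintegral_indicator hs]

lemma lpMass_indicator_preimage_sub (hp : p ≠ 0) {u : ℝ} (hu : 0 ≤ u) {E : Set ℝ}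
    (hE : MeasurableSet E) (hE0 : E ⊆ Ici 0) (f : ℝ → ℝ) :
    lpMass p v (((· - u) ⁻¹' E).indicator f) = ∫⁻ x in E, lpDensity p v f (x + u) ∂μ₊ := by
  have hA0 : (· - u) ⁻¹' E ⊆ Ici 0 := fun x hx => by
    have := hE0 hx
    simp only [mem_Ici, sub_nonneg] at this ⊢
    linarith
  rw [lpMass_indicator hp (measurable_sub_const u hE), Measure.restrict_restrict
    (measurable_sub_const u hE), inter_eq_left.2 hA0, Measure.restrict_restrict hE,
    inter_eq_left.2 hE0, ← (measurePreserving_add_right volume u).setLIntegral_comp_preimage_emb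
    (measurableEmbedding_addRight u)]
  congr 2
  ext x
  simp

end WeightedLp

/-- Since `m` has no atoms, `m.restrict S` charges every neighbourhood of two distinct points;
cut between them. -/
lemma exists_pos_measure_inter_Iic_inter_Ioi {m : Measure ℝ} [NullSingletonClass m] {S : Set ℝ}
    (hS : m S ≠ 0) : ∃ r, 0 < m (S ∩ Iic r) ∧ 0 < m (S ∩ Ioi r) := by
  have hfreq : ∀ b : ℝ, ∃ᵐ x ∂(m.restrict S), id x ≠ b := fun b => by
    rw [frequently_ae_iff]
    change m.restrict S {b}ᶜ ≠ 0
    rwa [Measure.restrict_apply (measurableSet_singleton b).compl, inter_comm, ← sdiff_eq,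
      measure_sdiff_null (measure_singleton b)]
  obtain ⟨a, b, hab, ha, hb⟩ := exists_ne_forall_mem_nhds_pos_measure_preimage hfreq
  wlog h : a < b generalizing a b
  · exact this b a hab.symm hb ha (hab.lt_or_gt.resolve_left h)
  obtain ⟨r, har, hrb⟩ := exists_between h
  refine ⟨r, ?_, ?_⟩
  · simpa [Measure.restrict_apply measurableSet_Iic, inter_comm] using ha _ (Iic_mem_nhds har)
  · simpa [Measure.restrict_apply measurableSet_Ioi, inter_comm] using hb _ (Ioi_mem_nhds hrb)

lemma exists_pairwise_disjoint_pos_measure {m : Measure ℝ} [NullSingletonClass m] (N : ℕ)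
    {S : Set ℝ} (hSm : MeasurableSet S) (hS : m S ≠ 0) :
    ∃ E : Fin N → Set ℝ, (∀ i, MeasurableSet (E i)) ∧ (∀ i, E i ⊆ S) ∧ (∀ i, 0 < m (E i)) ∧
      Pairwise (Disjoint on E) := by
  induction N generalizing S with
  | zero =>
    exact ⟨Fin.elim0, fun i => i.elim0, fun i => i.elim0, fun i => i.elim0, fun i => i.elim0⟩
  | succ N ih =>
    obtain ⟨r, hle, hgt⟩ := exists_pos_measure_inter_Iic_inter_Ioi hS
    obtain ⟨E, hEm, hES, hEpos, hEdisj⟩ := ih (hSm.inter measurableSet_Ioi) hgt.ne'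
    have hdisj : ∀ i, Disjoint (S ∩ Iic r) (E i) := fun i =>
      disjoint_left.2 fun x hx hxE => not_lt.2 (mem_Iic.1 hx.2) (hES i hxE).2
    refine ⟨Fin.cons (S ∩ Iic r) E, Fin.forall_fin_succ.2 ⟨?_, ?_⟩,
      Fin.forall_fin_succ.2 ⟨?_, ?_⟩, Fin.forall_fin_succ.2 ⟨?_, ?_⟩, ?_⟩
    · simpa using hSm.inter measurableSet_Iic
    · simpa using hEm
    · simp
    · simpa using fun i => (hES i).trans inter_subset_left
    · simpa using hle
    · simpa using hEpos
    · intro i j hij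
      induction i using Fin.cases <;> induction j using Fin.cases
      · exact absurd rfl hij
      · simpa [onFun] using hdisj _
      · simpa [onFun] using (hdisj _).symm
      · simpa [onFun] using hEdisj (fun h => hij (congrArg Fin.succ h))

/-- Take `G = {g ≤ κ f}`: if it carried no `f`-mass, then `κ ∫ f ≤ ∫ g`. -/
lemma exists_setLIntegral_pos_and_le_mul {α : Type*} [MeasurableSpace α] {μ : Measure α}
    {f g : α → ℝ≥0∞} (hf : AEMeasurable f μ) (hg : AEMeasurable g μ) {κ : ℝ≥0∞}
    (h : ∫⁻ x, g x ∂μ < κ * ∫⁻ x, f x ∂μ) :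
    ∃ G, MeasurableSet G ∧ 0 < ∫⁻ x in G, f x ∂μ ∧
      ∀ E ⊆ G, MeasurableSet E → ∫⁻ x in E, g x ∂μ ≤ κ * ∫⁻ x in E, f x ∂μ := by
  have hf_eq : ∀ s, ∫⁻ x in s, f x ∂μ = ∫⁻ x in s, hf.mk f x ∂μ := fun s =>
    lintegral_congr_ae (ae_restrict_of_ae hf.ae_eq_mk)
  have hg_eq : ∀ s, ∫⁻ x in s, g x ∂μ = ∫⁻ x in s, hg.mk g x ∂μ := fun s =>
    lintegral_congr_ae (ae_restrict_of_ae hg.ae_eq_mk)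
  set G := {x | hg.mk g x ≤ κ * hf.mk f x}
  have hG : MeasurableSet G := measurableSet_le hg.measurable_mk (hf.measurable_mk.const_mul κ)
  refine ⟨G, hG, pos_iff_ne_zero.2 fun h0 => h.not_ge ?_, fun E hEG hE => ?_⟩
  · calc κ * ∫⁻ x, f x ∂μ = κ * ∫⁻ x in Gᶜ, hf.mk f x ∂μ := by
          rw [← lintegral_add_compl f hG, h0, zero_add, hf_eq]
      _ = ∫⁻ x in Gᶜ, κ * hf.mk f x ∂μ := (lintegral_const_mul κ hf.measurable_mk).symm
      _ ≤ ∫⁻ x in Gᶜ, hg.mk g x ∂μ :=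
          setLIntegral_mono hg.measurable_mk
            fun x (hx : ¬ hg.mk g x ≤ κ * hf.mk f x) => (not_le.1 hx).le
      _ = ∫⁻ x in Gᶜ, g x ∂μ := (hg_eq _).symm
      _ ≤ ∫⁻ x, g x ∂μ := setLIntegral_le_lintegral _ _
  · rw [hf_eq, hg_eq, ← lintegral_const_mul κ hf.measurable_mk]
    exact setLIntegral_mono (hf.measurable_mk.const_mul κ) fun x hx => hEG hx

section Construction

variable {p : ℝ} {v : ℝ → ℝ}

/-- The witness is `H` cut off to `E + u` and renormalised. -/
lemma exists_normalized_bump (hp : 0 < p) (hv : AdmissibleWeight v) {H : ℝ → ℝ}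
    (hH : MemLpW p v H) {u η : ℝ} (hu : 0 ≤ u) (hη : 0 < η) {E : Set ℝ} (hE : MeasurableSet E)
    (hE0 : E ⊆ Ici 0) (hpos : 0 < ∫⁻ x in E, lpDensity p v (translateW u H) x ∂μ₊)
    (hle : ∫⁻ x in E, lpDensity p v H (x + u) ∂μ₊ ≤
      ENNReal.ofReal (η ^ p) * ∫⁻ x in E, lpDensity p v (translateW u H) x ∂μ₊) :
    ∃ x, MemLpW p v x ∧ lpNorm p v x ≤ η ∧ lpNorm p v (translateW u x) = 1 ∧
      ∀ ζ ∉ E, translateW u x ζ = 0 := by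
  have hv0 : ∀ x, 0 ≤ x → 0 ≤ v x := fun x hx => (hv.1 x hx).le
  have hvm := hv.aestronglyMeasurable
  set y := ((· - u) ⁻¹' E).indicator H
  have hTy : translateW u y = E.indicator (translateW u H) :=
    translateW_indicator_preimage_sub u E H
  have hy : MemLpW p v y := hH.mono hp.le hv0 hvm (hH.1.indicator (measurable_sub_const u hE))
    fun x => norm_indicator_le_norm_self H x
  have hTy_mem : MemLpW p v (translateW u y) := hy.translateW hv hu
  have hmass_y : ENNReal.ofReal (lpNorm p v y ^ p) =
      ∫⁻ x in E, lpDensity p v H (x + u) ∂μ₊ := by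
    rw [hy.ofReal_lpNorm_rpow hp.ne' hv0 hvm, lpMass_indicator_preimage_sub hp.ne' hu hE hE0]
  have hmass_Ty : ENNReal.ofReal (lpNorm p v (translateW u y) ^ p) =
      ∫⁻ x in E, lpDensity p v (translateW u H) x ∂μ₊ := by
    rw [hTy_mem.ofReal_lpNorm_rpow hp.ne' hv0 hvm, hTy, lpMass_indicator hp.ne' hE]
  have hTy_pos : 0 < lpNorm p v (translateW u y) := by
    refine (lpNorm_nonneg hv0).lt_of_ne fun h0 => hpos.ne' ?_
    rw [← hmass_Ty, ← h0, Real.zero_rpow hp.ne', ENNReal.ofReal_zero]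
  have hy_le : lpNorm p v y ≤ η * lpNorm p v (translateW u y) := by
    rw [← Real.rpow_le_rpow_iff (lpNorm_nonneg hv0) (by positivity) hp,
      ← ENNReal.ofReal_le_ofReal_iff (by positivity), hmass_y,
      Real.mul_rpow hη.le (lpNorm_nonneg hv0), ENNReal.ofReal_mul (by positivity), hmass_Ty]
    exact hle
  refine ⟨(lpNorm p v (translateW u y))⁻¹ • y, hy.const_smul _, ?_, ?_, fun ζ hζ => ?_⟩
  · rw [lpNorm_smul hp.ne' hv0, abs_inv, abs_of_pos hTy_pos, inv_mul_le_iff₀ hTy_pos, mul_comm]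
    exact hy_le
  · rw [translateW_smul, lpNorm_smul hp.ne' hv0, abs_inv, abs_of_pos hTy_pos,
      inv_mul_cancel₀ hTy_pos.ne']
  · simp [translateW_smul, hTy, hζ]

/-- The mass of `T_u H` cannot all sit where `v (· + u) > η ^ p v`; being atomless, its part on
the complementary set splits into `N` pieces of positive mass. -/
lemma exists_pieces_of_lpNorm_lt (hp : 0 < p) (hv : AdmissibleWeight v) {H : ℝ → ℝ}
    (hH : MemLpW p v H) {u η : ℝ} (hu : 0 ≤ u) (hη : 0 < η)
    (hgrow : lpNorm p v H < η * lpNorm p v (translateW u H)) (N : ℕ) :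
    ∃ E : Fin N → Set ℝ, Pairwise (Disjoint on E) ∧ ∀ i, MeasurableSet (E i) ∧ E i ⊆ Ici 0 ∧
      0 < ∫⁻ x in E i, lpDensity p v (translateW u H) x ∂μ₊ ∧
      ∫⁻ x in E i, lpDensity p v H (x + u) ∂μ₊ ≤
        ENNReal.ofReal (η ^ p) * ∫⁻ x in E i, lpDensity p v (translateW u H) x ∂μ₊ := by
  have hv0 : ∀ x, 0 ≤ x → 0 ≤ v x := fun x hx => (hv.1 x hx).le
  have hvm := hv.aestronglyMeasurable
  have hTH := hH.translateW hv hu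
  have hmass : ∫⁻ x, lpDensity p v H (x + u) ∂μ₊ <
      ENNReal.ofReal (η ^ p) * ∫⁻ x, lpDensity p v (translateW u H) x ∂μ₊ :=
    calc ∫⁻ x, lpDensity p v H (x + u) ∂μ₊ = ∫⁻ x in Ici u, lpDensity p v H x :=
          lintegral_Ici_comp_add _ u
      _ ≤ lpMass p v H := lintegral_mono_set (Ici_subset_Ici.2 hu)
      _ = ENNReal.ofReal (lpNorm p v H ^ p) := (hH.ofReal_lpNorm_rpow hp.ne' hv0 hvm).symm
      _ < ENNReal.ofReal ((η * lpNorm p v (translateW u H)) ^ p) :=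
          (ENNReal.ofReal_lt_ofReal_iff (by
            have := (lpNorm_nonneg (f := H) hv0).trans_lt hgrow; positivity)).2
          (Real.rpow_lt_rpow (lpNorm_nonneg hv0) hgrow hp)
      _ = ENNReal.ofReal (η ^ p) * lpMass p v (translateW u H) := by
          rw [Real.mul_rpow hη.le (lpNorm_nonneg hv0), ENNReal.ofReal_mul (by positivity),
            hTH.ofReal_lpNorm_rpow hp.ne' hv0 hvm]
  obtain ⟨G, hG, hGpos, hGle⟩ := exists_setLIntegral_pos_and_le_mul
    (hTH.1.rpow_abs_mul hvm).aemeasurable.ennreal_ofReal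
    (((hH.1.rpow_abs_mul hvm).aemeasurable.ennreal_ofReal).comp_quasiMeasurePreserving
      (quasiMeasurePreserving_add_Ici hu)) hmass
  have hG0 := hG.inter (measurableSet_Ici (a := (0:ℝ)))
  have hmG : μ₊.withDensity (lpDensity p v (translateW u H)) (G ∩ Ici 0) ≠ 0 := by
    rw [withDensity_apply _ hG0, Measure.restrict_restrict hG0, inter_assoc, inter_self]
    rw [Measure.restrict_restrict hG] at hGpos
    exact hGpos.ne'
  obtain ⟨E, hEm, hEG, hEpos, hEdisj⟩ := exists_pairwise_disjoint_pos_measure N hG0 hmG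
  refine ⟨E, hEdisj, fun i => ⟨hEm i, (hEG i).trans inter_subset_right, ?_,
    hGle _ ((hEG i).trans inter_subset_left) (hEm i)⟩⟩
  rw [← withDensity_apply _ (hEm i)]
  exact hEpos i

/-- Normalised bumps on disjoint pieces: `T_u` sends them to points at mutual distance `≥ 1`. -/
lemma exists_isSepSet_of_lpNorm_lt (hp : 0 < p) (hv : AdmissibleWeight v) {H : ℝ → ℝ}
    (hH : MemLpW p v H) {u η : ℝ} (hu : 0 ≤ u) (hη : 0 < η)
    (hgrow : lpNorm p v H < η * lpNorm p v (translateW u H)) (N : ℕ) :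
    ∃ S : Finset (ℝ → ℝ), S.card = N ∧ (∀ x ∈ S, MemLpW p v x ∧ lpNorm p v x ≤ η) ∧
      IsSepSet (fun f g => lpNorm p v (f - g)) translateW u 1 ↑S := by
  classical
  have hv0 : ∀ x, 0 ≤ x → 0 ≤ v x := fun x hx => (hv.1 x hx).le
  obtain ⟨E, hEdisj, hE⟩ := exists_pieces_of_lpNorm_lt hp hv hH hu hη hgrow N
  choose x hxmem hxle hxone hxsupp using fun i =>
    exists_normalized_bump hp hv hH hu hη (hE i).1 (hE i).2.1 (hE i).2.2.1 (hE i).2.2.2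
  have hsep : ∀ i j, i ≠ j → 1 ≤ lpNorm p v (translateW u (x i) - translateW u (x j)) :=
    fun i j hij => hxone i ▸ lpNorm_le_lpNorm_sub_of_disjoint hp.le hv0
      (((hxmem i).translateW hv hu).sub hp.le hv0 hv.aestronglyMeasurable
        ((hxmem j).translateW hv hu))
      fun ζ hζ => hxsupp j ζ fun hζj =>
        disjoint_left.1 (hEdisj hij) (not_not.1 fun hζi => hζ (hxsupp i ζ hζi)) hζj
  have hinj : Injective x := fun i j hxij => not_not.1 fun hij => by
    have := hsep i j hij
    rw [hxij, sub_self, lpNorm_zero hp.ne'] at this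
    linarith
  refine ⟨Finset.univ.image x, by rw [Finset.card_image_of_injective _ hinj, Finset.card_fin],
    by simpa using fun i => ⟨hxmem i, hxle i⟩, ?_⟩
  simp only [Finset.coe_image, Finset.coe_univ, image_univ]
  rintro _ ⟨i, rfl⟩ _ ⟨j, rfl⟩ hij
  exact ⟨u, ⟨hu, le_rfl⟩, hsep i j fun h => hij (h ▸ rfl)⟩

lemma exists_isSepSet_of_liYorke (hp : 0 < p) (hv : AdmissibleWeight v) {h : ℝ → ℝ}
    (hh : MemLpW p v h) (hsmall : ∀ δ > (0:ℝ), ∃ᶠ t in atTop, lpNorm p v (translateW t h) < δ)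
    {c : ℝ} (hc : 0 < c) (hbig : ∃ᶠ t in atTop, c ≤ lpNorm p v (translateW t h))
    {η : ℝ} (hη : 0 < η) (T : ℝ) :
    ∃ u, T ≤ u ∧ ∀ N : ℕ, ∃ S : Finset (ℝ → ℝ), S.card = N ∧
      (∀ x ∈ S, MemLpW p v x ∧ lpNorm p v x ≤ η) ∧
      IsSepSet (fun f g => lpNorm p v (f - g)) translateW u 1 ↑S := by
  obtain ⟨a, ha0, ha⟩ := frequently_atTop.1 (hsmall (η * c) (by positivity)) 0
  obtain ⟨b, hab, hb⟩ := frequently_atTop.1 hbig (a + max T 0)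
  refine ⟨b - a, by linarith [le_max_left T 0], exists_isSepSet_of_lpNorm_lt hp hv
    (hh.translateW hv ha0) (by linarith [le_max_right T 0]) hη ?_⟩
  rw [translateW_translateW, sub_add_cancel]
  exact ha.trans_le (by gcongr)

end Construction

theorem lp_infinite_entropy_of_liYorke_pair
    (p : ℝ) (hp : 0 < p) (v : ℝ → ℝ) (hv : AdmissibleWeight v)
    (hLY : ∃ f g, MemLpW p v f ∧ MemLpW p v g ∧
      -- liminf_{t→∞} ‖T_t f − T_t g‖ = 0
      (∀ ε > (0:ℝ), ∃ᶠ t in Filter.atTop,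
        lpNorm p v (translateW t f - translateW t g) < ε) ∧
      -- limsup_{t→∞} ‖T_t f − T_t g‖ > 0
      (∃ c > (0:ℝ), ∃ᶠ t in Filter.atTop,
        c ≤ lpNorm p v (translateW t f - translateW t g))) :
    entropyFam (fun f g => lpNorm p v (f - g)) translateW {f | MemLpW p v f} = ⊤ := by
  obtain ⟨f, g, hf, hg, hsmall, c, hc, hbig⟩ := hLY
  have hv0 : ∀ x, 0 ≤ x → 0 ≤ v x := fun x hx => (hv.1 x hx).le
  have hh := hf.sub hp.le hv0 hv.aestronglyMeasurable hg
  choose u hu hS using fun j : ℕ =>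
    exists_isSepSet_of_liYorke hp hv hh hsmall hc hbig (η := (1 / 2) ^ j) (by positivity) j
  choose S hcard hSmem hsep using fun j => hS j ⌈Real.exp (j * u j)⌉₊
  refine entropyFam_eq_top_of_isSepSet (r := fun j => (1 / 2) ^ j)
    (fun x => by simp [lpNorm_zero hp.ne']) (fun _ _ => lpNorm_nonneg hv0) (memLpW_zero hp.ne')
    one_pos (fun j x hx => (hSmem j x hx).1)
    (tendsto_pow_atTop_nhds_zero_of_lt_one (by norm_num) (by norm_num))
    (fun j x hx => by simpa using (hSmem j x hx).2)
    (tendsto_atTop_mono hu tendsto_natCast_atTop_atTop) hsep fun j => ?_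
  rw [hcard]
  exact Nat.le_ceil _
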